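/- arXiv:0705.0603 — 2 statements merged into one kernel-verified Lean document; each statement's English description precedes it below -/
import Mathlib

section
/- Consider the quadratic cone S: y^2 = x_1 x_2 in ℂ^{d+1} with d > 2. Its semigroup is Λ = {(a_1, a_2, a_3, …, a_d) ∈ ℤ_{≥0}^d : a_1 ≡ a_2 mod 2}. For the two vectors w_1 = (1/2)(e_1^* + e_2^*) (valued in ℤ on Λ) and w_2 = w_1 + e_3^* + ⋯ + e_d^*, the two-variable Poincaré series ∑_{u ∈ Λ} t_1^{⟨w_1,u⟩} t_2^{⟨w_2,u⟩} equals (1 − t_1^2 t_2^2)/((1 − t_1 t_2)^3 (1 − t_2)^{d−2}). -/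
/-!
Write `d = n + 2`. A point `u ∈ Λ` with `⟨w₁,u⟩ = a` and `⟨w₂,u⟩ = b` is a pair `(u₁, u₂)` with
`u₁ + u₂ = 2a` together with `v ∈ ℕⁿ` of total `b - a`, so there are
`(2a + 1) · C(n - 1 + b - a, b - a)` of them when `a ≤ b` and none otherwise. The Poincaré series
therefore factors as `f(t₁t₂) · g(t₂)` with `f(x) = ∑ (2k + 1) xᵏ = (1 + x)/(1 - x)²` and
`g(x) = (1 - x)⁻ⁿ`, and `(1 + x)(1 - x) = 1 - x²` at `x = t₁t₂` gives the identity.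
-/

section Counting

open Finset

lemma sum_filter_two_le {M : Type*} [AddCommMonoid M] {n : ℕ} (u : Fin (n + 2) → M) :
    ∑ i ∈ univ.filter (fun i : Fin (n + 2) => 2 ≤ (i : ℕ)), u i = ∑ j : Fin n, u j.succ.succ := by
  simp [sum_filter, Fin.sum_univ_succ]

lemma ncard_setOf_sum_eq (k n : ℕ) :
    {v : Fin k → ℕ | ∑ i, v i = n}.ncard = (k + n - 1).choose n := by
  rw [← Nat.card_coe_set_eq, Set.coe_ofPred,
    ← Nat.card_congr (Sym.equivNatSumOfFintype (Fin k) n), Nat.card_eq_fintype_card,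
    Sym.card_sym_eq_choose, Fintype.card_fin]

lemma ncard_setOf_add_sum_eq (k a b : ℕ) :
    {v : Fin k → ℕ | a + ∑ i, v i = b}.ncard =
      if a ≤ b then (k + (b - a) - 1).choose (b - a) else 0 := by
  split_ifs with h
  · rw [← ncard_setOf_sum_eq]
    congr 1
    ext v
    simp only [Set.mem_ofPred_eq]
    omega
  · convert Set.ncard_empty (Fin k → ℕ)
    ext v
    simp only [Set.mem_ofPred_eq, Set.mem_empty_iff_false, iff_false]
    omega

/-- The points `u ∈ Λ ⊆ ℕ^(n+2)` with `⟨w₁,u⟩ = a` and `⟨w₂,u⟩ = b`; the parity condition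
of `Λ` is implied by `u 0 + u 1 = 2 * a`. -/
def coneFiber (n a b : ℕ) : Set (Fin (n + 2) → ℕ) :=
  {u | u 0 + u 1 = 2 * a ∧ a + ∑ i ∈ univ.filter (fun i : Fin (n + 2) => 2 ≤ (i : ℕ)), u i = b}

lemma coneFiber_eq_image (n a b : ℕ) :
    coneFiber n a b = (fun p : (ℕ × ℕ) × (Fin n → ℕ) => Fin.cons p.1.1 (Fin.cons p.1.2 p.2)) ''
      ({x : ℕ × ℕ | x.1 + x.2 = 2 * a} ×ˢ {v | a + ∑ i, v i = b}) := by
  ext u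
  constructor
  · rintro ⟨h01, hsum⟩
    refine ⟨((u 0, u 1), Fin.tail (Fin.tail u)), ⟨h01, ?_⟩, ?_⟩
    · simpa [sum_filter_two_le, Fin.tail] using hsum
    · change Fin.cons (u 0) (Fin.cons (Fin.tail u 0) (Fin.tail (Fin.tail u))) = u
      rw [Fin.cons_self_tail, Fin.cons_self_tail]
  · rintro ⟨⟨⟨x, y⟩, v⟩, ⟨hxy, hv⟩, rfl⟩
    exact ⟨hxy, by simpa [sum_filter_two_le] using hv⟩

lemma ncard_coneFiber (n a b : ℕ) :
    (coneFiber n a b).ncard = (2 * a + 1) * {v : Fin n → ℕ | a + ∑ i, v i = b}.ncard := by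
  have hinj : Function.Injective fun p : (ℕ × ℕ) × (Fin n → ℕ) =>
      (Fin.cons p.1.1 (Fin.cons p.1.2 p.2) : Fin (n + 2) → ℕ) := by
    rintro ⟨⟨x, y⟩, v⟩ ⟨⟨x', y'⟩, v'⟩ h
    simp only [Fin.cons_inj] at h
    obtain ⟨rfl, rfl, rfl⟩ := h
    rfl
  have hanti : {x : ℕ × ℕ | x.1 + x.2 = 2 * a} = ↑(antidiagonal (2 * a)) := by
    ext; simp
  rw [coneFiber_eq_image, Set.ncard_image_of_injective _ hinj, Set.ncard_prod, hanti,
    Set.ncard_coe_finset, Nat.card_antidiagonal]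

end Counting

section Series

open PowerSeries

variable {R : Type*} [CommRing R] {σ : Type*}

lemma mk_two_mul_add_one_mul_one_sub_X_sq :
    (mk fun n => (2 * n + 1 : R)) * (1 - X) ^ 2 = 1 + X := by
  have h : (mk fun n => (2 * n + 1 : R)) = (1 + X) * mk fun n => ((1 + n).choose 1 : R) := by
    ext (_ | n)
    · simp
    · simp [add_mul, coeff_succ_X_mul]
      ring
  rw [h, mul_assoc, mk_add_choose_mul_one_sub_pow_eq_one, mul_one]

lemma subst_mk_two_mul_add_one_mul_one_sub_pow_three {a : MvPowerSeries σ R} (ha : HasSubst a) :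
    (mk fun n => (2 * n + 1 : R)).subst a * (1 - a) ^ 3 = 1 - a ^ 2 := by
  have h : (mk fun n => (2 * n + 1 : R)) * (1 - X) ^ 3 = 1 - X ^ 2 := by
    rw [pow_succ, ← mul_assoc, mk_two_mul_add_one_mul_one_sub_X_sq]
    ring
  simpa [← coe_substAlgHom ha, substAlgHom_X] using congrArg (substAlgHom ha) h

lemma subst_invOneSubPow_mul_one_sub_pow {a : MvPowerSeries σ R} (ha : HasSubst a) (d : ℕ) :
    (invOneSubPow R d).val.subst a * (1 - a) ^ d = 1 := by
  have h : (invOneSubPow R d).val * (1 - X) ^ d = 1 := by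
    rw [← invOneSubPow_inv_eq_one_sub_pow]
    exact (invOneSubPow R d).val_inv
  simpa [← coe_substAlgHom ha, substAlgHom_X] using congrArg (substAlgHom ha) h

lemma hasSubst_X_mul_X :
    HasSubst (MvPowerSeries.X 0 * MvPowerSeries.X 1 : MvPowerSeries (Fin 2) R) :=
  HasSubst.of_constantCoeff_zero (by simp)

lemma coeff_X_mul_X_pow (n : ℕ) (a : Fin 2 →₀ ℕ) :
    MvPowerSeries.coeff a ((MvPowerSeries.X 0 * MvPowerSeries.X 1 : MvPowerSeries (Fin 2) R) ^ n) =
      if a 0 = n ∧ a 1 = n then 1 else 0 := by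
  simp [mul_pow, MvPowerSeries.X_pow_eq, MvPowerSeries.monomial_mul_monomial,
    MvPowerSeries.coeff_monomial, Finsupp.ext_iff, Fin.forall_fin_two]

lemma coeff_subst_X_mul_X (φ : R⟦X⟧) (a : Fin 2 →₀ ℕ) :
    MvPowerSeries.coeff a
        (φ.subst (MvPowerSeries.X 0 * MvPowerSeries.X 1 : MvPowerSeries (Fin 2) R)) =
      if a 0 = a 1 then coeff (a 0) φ else 0 := by
  rw [coeff_subst hasSubst_X_mul_X, finsum_eq_single _ (a 0)]
  · simp [coeff_X_mul_X_pow, eq_comm]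
  · intro n hn
    rw [coeff_X_mul_X_pow, if_neg (fun h => hn h.1.symm), smul_zero]

lemma coeff_subst_X_one (ψ : R⟦X⟧) (a : Fin 2 →₀ ℕ) :
    MvPowerSeries.coeff a (ψ.subst (MvPowerSeries.X 1 : MvPowerSeries (Fin 2) R)) =
      if a 0 = 0 then coeff (a 1) ψ else 0 := by
  rw [coeff_subst_single]
  congr 1
  simp [Finsupp.ext_iff, Fin.forall_fin_two]

open Finset in
lemma coeff_subst_X_mul_X_mul_subst_X_one (φ ψ : R⟦X⟧) (a : Fin 2 →₀ ℕ) :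
    MvPowerSeries.coeff a
        (φ.subst (MvPowerSeries.X 0 * MvPowerSeries.X 1 : MvPowerSeries (Fin 2) R) *
          ψ.subst (MvPowerSeries.X 1 : MvPowerSeries (Fin 2) R)) =
      if a 0 ≤ a 1 then coeff (a 0) φ * coeff (a 1 - a 0) ψ else 0 := by
  rw [MvPowerSeries.coeff_mul]
  have hmem : ∀ p ∈ antidiagonal a, p.1 0 + p.2 0 = a 0 ∧ p.1 1 + p.2 1 = a 1 := by
    intro p hp
    rw [HasAntidiagonal.mem_antidiagonal] at hp
    exact ⟨by rw [← hp]; rfl, by rw [← hp]; rfl⟩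
  split_ifs with ha
  · rw [sum_eq_single_of_mem (Finsupp.single 0 (a 0) + Finsupp.single 1 (a 0),
      Finsupp.single 1 (a 1 - a 0))]
    · simp [coeff_subst_X_mul_X, coeff_subst_X_one]
    · simp [Finsupp.ext_iff, Fin.forall_fin_two]
      omega
    · rintro ⟨p, q⟩ hpq hne
      obtain ⟨h0, h1⟩ := hmem _ hpq
      rw [coeff_subst_X_mul_X, coeff_subst_X_one]
      split_ifs with hp hq
      · exfalso
        apply hne
        simp only [Prod.ext_iff, Finsupp.ext_iff, Fin.forall_fin_two] at h0 h1 hp hq ⊢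
        simp only [Finsupp.coe_add, Pi.add_apply, Finsupp.single_eq_same, ne_eq, zero_ne_one,
          not_false_eq_true, Finsupp.single_eq_of_ne, one_ne_zero, add_zero, zero_add]
        exact ⟨⟨by omega, by omega⟩, hq, by omega⟩
      all_goals simp
  · refine sum_eq_zero fun p hp => ?_
    obtain ⟨h0, h1⟩ := hmem p hp
    rw [coeff_subst_X_mul_X, coeff_subst_X_one]
    split_ifs <;> first | simp | omega

end Series

noncomputable def poincareSeries (n : ℕ) : MvPowerSeries (Fin 2) ℤ :=
  fun a => ((coneFiber n (a 0) (a 1)).ncard : ℤ)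

lemma poincareSeries_eq (n : ℕ) :
    poincareSeries (n + 1) =
      (PowerSeries.mk fun k => (2 * k + 1 : ℤ)).subst (MvPowerSeries.X 0 * MvPowerSeries.X 1) *
        (PowerSeries.invOneSubPow ℤ (n + 1)).val.subst (MvPowerSeries.X 1) := by
  ext a
  rw [coeff_subst_X_mul_X_mul_subst_X_one]
  change ((coneFiber (n + 1) (a 0) (a 1)).ncard : ℤ) = _
  rw [ncard_coneFiber, ncard_setOf_add_sum_eq]
  split_ifs
  · simp [PowerSeries.invOneSubPow_val_succ_eq_mk_add_choose, ← Nat.choose_symm_add]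
  · simp

/-- for the quadratic cone `y² = x₁x₂` in `ℂ^{d+1}`, `d = e + 3 > 2`, with
semigroup `Λ = {u ∈ ℤ_{≥0}^d : u₁ ≡ u₂ mod 2}` and the two essential monomial valuations
`⟨w₁,u⟩ = (u₁+u₂)/2` and `⟨w₂,u⟩ = (u₁+u₂)/2 + u₃ + ⋯ + u_d`, the two-variable Poincaré
series `∑_{u∈Λ} t₁^{⟨w₁,u⟩} t₂^{⟨w₂,u⟩}` equals `(1 − t₁²t₂²)/((1 − t₁t₂)³(1 − t₂)^{d−2})`,
i.e. `S · (1 − t₁t₂)³ (1 − t₂)^{d−2} = 1 − t₁²t₂²`. -/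
theorem stmt12 (e : ℕ) :
    (show MvPowerSeries (Fin 2) ℤ from fun a =>
        (Set.ncard {u : Fin (e + 3) → ℕ |
            u 0 + u 1 = 2 * a 0 ∧
            a 0 + ∑ i ∈ Finset.univ.filter (fun i : Fin (e + 3) => 2 ≤ (i : ℕ)), u i
              = a 1} : ℤ))
      * (1 - MvPowerSeries.X 0 * MvPowerSeries.X 1) ^ 3
      * (1 - MvPowerSeries.X 1) ^ (e + 1)
      = 1 - (MvPowerSeries.X 0) ^ 2 * (MvPowerSeries.X 1) ^ 2 := by
  change poincareSeries (e + 1) * _ * _ = _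
  rw [poincareSeries_eq, mul_right_comm (PowerSeries.subst _ _), mul_assoc,
    subst_mk_two_mul_add_one_mul_one_sub_pow_three hasSubst_X_mul_X,
    subst_invOneSubPow_mul_one_sub_pow (PowerSeries.HasSubst.X 1)]
  ring
end

section
/- Let R = ℂ[[Λ]] for Λ ⊂ ℤ_{≥0}^d a finitely generated semigroup, and let ν be the monomial valuation defined by v ∈ ℤ_{>0}^d. Let w ∈ ℤ_{≥0}^d define another monomial valuation ω. For a nonzero homogeneous element h̄ ∈ I(a)/I(a+1) of the associated graded ring gr_ν R, define ω̄(h̄) = max{ω(h) : h ∈ R, h ≡ h̄ mod I(a+1)}. Then ω̄(h̄) = ω(h_{|v}) where h_{|v} is the weight-a (with respect to v) homogeneous part of any representative h of h̄ with ν(h) = a; in particular the maximum is attained. -/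
/-!
The initial form `h_{|v}` is itself a representative of the class of `h`. Any other
representative `φ` agrees with `h` in `v`-weights `≤ a`, hence with `h_{|v}` on the support
of `h_{|v}`; in particular the monomial of `h_{|v}` realising `ω(h_{|v})` occurs in `φ`,
so `ω(φ) ≤ ω(h_{|v})`.
-/

/-- The weight `⟨v,u⟩`. -/
def stmt17wt (d : ℕ) (v : Fin d → ℕ) (u : Fin d →₀ ℕ) : ℕ := ∑ i, v i * u i

/-- The monomial valuation associated to `v`. -/
noncomputable def stmt17val (d : ℕ) (v : Fin d → ℕ) (φ : MvPowerSeries (Fin d) ℂ) : ℕ :=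
  sInf {k | ∃ u, MvPowerSeries.coeff u φ ≠ 0 ∧ stmt17wt d v u = k}

open Classical in
/-- The initial form `h_{|v}`: the sum of the terms of `h` of minimal `v`-weight
(the symbolic restriction to the face of the Newton polyhedron defined by `v`). -/
noncomputable def stmt17init (d : ℕ) (v : Fin d → ℕ) (h : MvPowerSeries (Fin d) ℂ) :
    MvPowerSeries (Fin d) ℂ :=
  fun u => if stmt17wt d v u = stmt17val d v h then MvPowerSeries.coeff u h else 0

section MonomialValuation

open MvPowerSeries

variable {d : ℕ} (v : Fin d → ℕ)

theorem stmt17val_le_stmt17wt {φ : MvPowerSeries (Fin d) ℂ} {u : Fin d →₀ ℕ}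
    (hu : coeff u φ ≠ 0) : stmt17val d v φ ≤ stmt17wt d v u :=
  Nat.sInf_le ⟨u, hu, rfl⟩

theorem exists_stmt17wt_eq_stmt17val {φ : MvPowerSeries (Fin d) ℂ} (hφ : φ ≠ 0) :
    ∃ u, coeff u φ ≠ 0 ∧ stmt17wt d v u = stmt17val d v φ := by
  obtain ⟨u, hu⟩ : ∃ u, coeff u φ ≠ 0 := by
    by_contra! hzero
    exact hφ (MvPowerSeries.ext hzero)
  exact Nat.sInf_mem (s := {k | ∃ u, coeff u φ ≠ 0 ∧ stmt17wt d v u = k}) ⟨_, u, hu, rfl⟩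

theorem stmt17val_le_of_coeff_eq {φ ψ : MvPowerSeries (Fin d) ℂ} (hψ : ψ ≠ 0)
    (hφψ : ∀ u, coeff u ψ ≠ 0 → coeff u φ = coeff u ψ) :
    stmt17val d v φ ≤ stmt17val d v ψ := by
  obtain ⟨u, hu, hwt⟩ := exists_stmt17wt_eq_stmt17val v hψ
  rw [← hwt]
  exact stmt17val_le_stmt17wt v (by rwa [hφψ u hu])

theorem coeff_stmt17init (h : MvPowerSeries (Fin d) ℂ) (u : Fin d →₀ ℕ) :
    open Classical in
    coeff u (stmt17init d v h) =
      if stmt17wt d v u = stmt17val d v h then coeff u h else 0 :=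
  rfl

theorem coeff_stmt17init_ne_zero_iff {h : MvPowerSeries (Fin d) ℂ} {u : Fin d →₀ ℕ} :
    coeff u (stmt17init d v h) ≠ 0 ↔ coeff u h ≠ 0 ∧ stmt17wt d v u = stmt17val d v h := by
  rw [coeff_stmt17init]
  split_ifs with hwt <;> simp [hwt]

theorem coeff_stmt17init_of_stmt17wt_le {h : MvPowerSeries (Fin d) ℂ} {u : Fin d →₀ ℕ}
    (hu : stmt17wt d v u ≤ stmt17val d v h) : coeff u (stmt17init d v h) = coeff u h := by
  rw [coeff_stmt17init]
  split_ifs with hwt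
  · rfl
  · by_contra hne
    exact hwt (le_antisymm hu (stmt17val_le_stmt17wt v (Ne.symm hne)))

theorem stmt17init_ne_zero {h : MvPowerSeries (Fin d) ℂ} (hh : h ≠ 0) :
    stmt17init d v h ≠ 0 := by
  obtain ⟨u, hu, hwt⟩ := exists_stmt17wt_eq_stmt17val v hh
  intro hzero
  exact (coeff_stmt17init_ne_zero_iff v).2 ⟨hu, hwt⟩ (by rw [hzero, map_zero])

end MonomialValuation

theorem stmt17_general (d : ℕ) (Λ : AddSubmonoid (Fin d →₀ ℕ)) (v w : Fin d → ℕ)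
    (h : MvPowerSeries (Fin d) ℂ) (hh : h ≠ 0)
    (hsupp : ∀ u, MvPowerSeries.coeff u h ≠ 0 → u ∈ Λ)
    (a : ℕ) (ha : stmt17val d v h = a) :
    IsGreatest
      {k : ℕ | ∃ φ : MvPowerSeries (Fin d) ℂ, φ ≠ 0 ∧
        (∀ u, MvPowerSeries.coeff u φ ≠ 0 → u ∈ Λ) ∧
        (∀ u, stmt17wt d v u ≤ a → MvPowerSeries.coeff u φ = MvPowerSeries.coeff u h) ∧
        stmt17val d w φ = k}
      (stmt17val d w (stmt17init d v h)) := by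
  subst ha
  refine ⟨⟨stmt17init d v h, stmt17init_ne_zero v hh,
    fun u hu => hsupp u ((coeff_stmt17init_ne_zero_iff v).1 hu).1,
    fun u hu => coeff_stmt17init_of_stmt17wt_le v hu, rfl⟩, ?_⟩
  rintro _ ⟨φ, -, -, hφh, rfl⟩
  refine stmt17val_le_of_coeff_eq w (stmt17init_ne_zero v hh) fun u hu => ?_
  obtain ⟨-, hwt⟩ := (coeff_stmt17init_ne_zero_iff v).1 hu
  rw [hφh u hwt.le, coeff_stmt17init_of_stmt17wt_le v hwt.le]

/-- in `R = ℂ[[Λ]]` (power series supported on the semigroup `Λ`), for the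
monomial valuations `ν` (of `v ∈ ℤ_{>0}^d`) and `ω` (of `w`), and a nonzero `h ∈ R` with
`ν(h) = a`, the maximum of `ω` over representatives of the class of `h` in `I(a)/I(a+1)`
is attained and equals `ω(h_{|v})`. -/
theorem stmt17 (d : ℕ) (Λ : AddSubmonoid (Fin d →₀ ℕ)) (v w : Fin d → ℕ)
    (hv : ∀ i, 0 < v i) (h : MvPowerSeries (Fin d) ℂ) (hh : h ≠ 0)
    (hsupp : ∀ u, MvPowerSeries.coeff u h ≠ 0 → u ∈ Λ)
    (a : ℕ) (ha : stmt17val d v h = a) :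
    IsGreatest
      {k : ℕ | ∃ φ : MvPowerSeries (Fin d) ℂ, φ ≠ 0 ∧
        (∀ u, MvPowerSeries.coeff u φ ≠ 0 → u ∈ Λ) ∧
        (∀ u, stmt17wt d v u ≤ a → MvPowerSeries.coeff u φ = MvPowerSeries.coeff u h) ∧
        stmt17val d w φ = k}
      (stmt17val d w (stmt17init d v h)) :=
  stmt17_general d Λ v w h hh hsupp a ha
end
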